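/- arXiv:2601.05550 — 4 statements merged into one kernel-verified Lean document; each statement's English description precedes it below -/
import Mathlib

section
/- Let g : ℝ → ℝ be continuous, non-decreasing and everywhere positive, let C > 0, q ≥ 0, θ > 0 and τ ≥ θq + 1 be constants, let R ∈ (0,∞), and let v : [0,R) → ℝ solve the Cauchy problem (★) with v(0) = a and right derivative v'(0) = 0 at the origin. Then for every r ∈ (0,R): (v'(r))^{θ+1} ≤ ((θ+1)/θ) · C^θ · R^{τ − qθ − 1} · ∫_a^{v(r)} g(s) ds. -/
open Real MeasureTheory Set Filter Topology ENNReal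

/-- The right-hand side of the Cauchy problem (★):
`C · r^{-q} · (∫_0^r s^{τ-1} g(v(s)) ds)^{1/θ}`. -/
noncomputable def cauchyRHS (C q τ θ : ℝ) (g v : ℝ → ℝ) (r : ℝ) : ℝ :=
  C * r ^ (-q) * (∫ s in (0:ℝ)..r, s ^ (τ - 1) * g (v s)) ^ (1 / θ)

/-- `v : ℝ → ℝ` solves the Cauchy problem (★) on `[0, R)` (with `R ∈ (0, ∞]` an
extended nonnegative real): `v` is continuous on `[0, R)`, `v 0 = a`, and at every
`r ∈ (0, R)` the derivative of `v` exists and is given by `cauchyRHS`. -/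
def SolvesCauchy (C q τ θ a : ℝ) (g : ℝ → ℝ) (R : ℝ≥0∞) (v : ℝ → ℝ) : Prop :=
  ContinuousOn v {r : ℝ | 0 ≤ r ∧ ENNReal.ofReal r < R} ∧
  v 0 = a ∧
  ∀ r : ℝ, 0 < r → ENNReal.ofReal r < R → HasDerivAt v (cauchyRHS C q τ θ g v r) r

/-- The Keller–Osserman condition:
`∫_b^∞ (∫_0^t g(s) ds)^{-1/(θ+1)} dt = +∞` for every `b > 0`. -/
def KellerOsserman (θ : ℝ) (g : ℝ → ℝ) : Prop :=
  ∀ b : ℝ, 0 < b →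
    ∫⁻ t in Set.Ioi b, ENNReal.ofReal ((∫ s in (0:ℝ)..t, g s) ^ (-(1 / (θ + 1)))) = ⊤

/-!
Put `P = (v')^θ = C^θ r^{-qθ} ∫_0^r s^{τ-1} g(v(s)) ds`. Since `q ≥ 0`, the factor `r^{-qθ}` only
decreases, so `P' ≤ C^θ r^{τ-qθ-1} g(v) ≤ B g(v)` with `B = C^θ R^{τ-qθ-1}`, using `τ ≥ θq + 1`.
With `p = (θ+1)/θ`, so that `v' = P^{p-1}`, the energy `Φ = p B ∫_a^v g - P^p` then satisfies
`Φ' = p P^{p-1} (B g(v) - P') ≥ 0`, and `Φ → 0` at `0⁺` because `P(r) = O(r^{τ-qθ})`.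
Hence `Φ ≥ 0`, i.e. `(v')^{θ+1} = P^p ≤ p B ∫_a^v g`.
-/

theorem le_of_tendsto_nhdsGT_of_hasDerivAt_nonneg {f : ℝ → ℝ} {a b l : ℝ} (hab : a < b)
    (hf : ∀ x ∈ Ioc a b, ∃ f', HasDerivAt f f' x ∧ 0 ≤ f')
    (hlim : Tendsto f (𝓝[>] a) (𝓝 l)) : l ≤ f b := by
  have hmono : MonotoneOn f (Ioc a b) := by
    refine monotoneOn_of_deriv_nonneg (convex_Ioc a b) (fun x hx => ?_) (fun x hx => ?_)
      fun x hx => ?_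
    · obtain ⟨f', hf', -⟩ := hf x hx
      exact hf'.continuousAt.continuousWithinAt
    · rw [interior_Ioc] at hx
      obtain ⟨f', hf', -⟩ := hf x (Ioo_subset_Ioc_self hx)
      exact hf'.differentiableAt.differentiableWithinAt
    · rw [interior_Ioc] at hx
      obtain ⟨f', hf', hf'_nonneg⟩ := hf x (Ioo_subset_Ioc_self hx)
      rwa [hf'.deriv]
  refine le_of_tendsto hlim (eventually_of_mem (Ioo_mem_nhdsGT hab) fun x hx => ?_)
  exact hmono (Ioo_subset_Ioc_self hx) (right_mem_Ioc.2 hab) hx.2.le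

theorem rpow_le_mul_integral_of_hasDerivAt {P u g : ℝ → ℝ} {p B r a : ℝ} (hp : 1 ≤ p)
    (hg : Continuous g) (hr : 0 < r) (hP_nonneg : ∀ x ∈ Ioc 0 r, 0 ≤ P x)
    (hP : ∀ x ∈ Ioc 0 r, ∃ P', HasDerivAt P P' x ∧ P' ≤ B * g (u x))
    (hu : ∀ x ∈ Ioc 0 r, HasDerivAt u (P x ^ (p - 1)) x)
    (hP_lim : Tendsto P (𝓝[>] 0) (𝓝 0)) (hu_lim : Tendsto u (𝓝[>] 0) (𝓝 a)) :
    P r ^ p ≤ p * B * ∫ s in a..u r, g s := by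
  have hG : ∀ t, HasDerivAt (fun t => ∫ s in a..t, g s) (g t) t := fun t =>
    intervalIntegral.integral_hasDerivAt_right (hg.intervalIntegrable a t)
      (hg.stronglyMeasurableAtFilter _ _) hg.continuousAt
  have hGu_lim : Tendsto (fun x => ∫ s in a..u x, g s) (𝓝[>] 0) (𝓝 0) := by
    have := (hG a).continuousAt.tendsto.comp hu_lim
    rwa [intervalIntegral.integral_same] at this
  have hPp_lim : Tendsto (fun x => P x ^ p) (𝓝[>] 0) (𝓝 0) := by
    have := (continuousAt_rpow_const 0 p (Or.inr (by linarith))).tendsto.comp hP_lim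
    rwa [zero_rpow (by linarith)] at this
  have henergy : 0 ≤ p * B * (∫ s in a..u r, g s) - P r ^ p := by
    refine le_of_tendsto_nhdsGT_of_hasDerivAt_nonneg
      (f := fun x => p * B * (∫ s in a..u x, g s) - P x ^ p) hr (fun x hx => ?_)
      (by simpa using (hGu_lim.const_mul (p * B)).sub hPp_lim)
    obtain ⟨P', hP', hP'_le⟩ := hP x hx
    refine ⟨_, (((hG (u x)).comp x (hu x hx)).const_mul (p * B)).sub
      ((hasDerivAt_rpow_const (Or.inr hp)).comp x hP'), ?_⟩
    have hw : 0 ≤ p * P x ^ (p - 1) := mul_nonneg (by linarith) (rpow_nonneg (hP_nonneg x hx) _)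
    nlinarith [mul_le_mul_of_nonneg_left hP'_le hw]
  linarith

theorem norm_integral_rpow_mul_le {f : ℝ → ℝ} {τ x M : ℝ} (hτ : 0 < τ) (hx : 0 ≤ x)
    (hf : ∀ s ∈ Ioc 0 x, ‖f s‖ ≤ M) :
    ‖∫ s in (0:ℝ)..x, s ^ (τ - 1) * f s‖ ≤ M * x ^ τ / τ := by
  have hint : IntervalIntegrable (fun s : ℝ => s ^ (τ - 1) * M) volume 0 x :=
    (intervalIntegral.intervalIntegrable_rpow' (by linarith)).mul_const M
  calc ‖∫ s in (0:ℝ)..x, s ^ (τ - 1) * f s‖ ≤ ∫ s in (0:ℝ)..x, s ^ (τ - 1) * M := by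
        refine intervalIntegral.norm_integral_le_of_norm_le hx (ae_of_all _ fun s hs => ?_) hint
        rw [norm_mul, norm_of_nonneg (rpow_nonneg hs.1.le _)]
        exact mul_le_mul_of_nonneg_left (hf s hs) (rpow_nonneg hs.1.le _)
    _ = M * x ^ τ / τ := by
        rw [intervalIntegral.integral_mul_const, integral_rpow (Or.inl (by linarith)),
          sub_add_cancel, zero_rpow hτ.ne']
        ring

theorem tendsto_rpow_neg_mul_integral_rpow_mul_nhdsGT_zero {f : ℝ → ℝ} {p τ b M : ℝ}
    (hτ : 0 < τ) (hpτ : p < τ) (hb : 0 < b) (hf : ∀ s ∈ Ioc 0 b, ‖f s‖ ≤ M) :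
    Tendsto (fun x => x ^ (-p) * ∫ s in (0:ℝ)..x, s ^ (τ - 1) * f s) (𝓝[>] 0) (𝓝 0) := by
  have hbound : Tendsto (fun x : ℝ => M / τ * x ^ (τ - p)) (𝓝[>] 0) (𝓝 0) := by
    simpa [zero_rpow (sub_pos.2 hpτ).ne'] using
      ((continuousAt_rpow_const 0 _ (Or.inr (sub_pos.2 hpτ).le)).tendsto.mono_left
        nhdsWithin_le_nhds).const_mul (M / τ)
  refine squeeze_zero_norm' (eventually_of_mem (Ioo_mem_nhdsGT hb) fun x hx => ?_) hbound
  calc ‖x ^ (-p) * ∫ s in (0:ℝ)..x, s ^ (τ - 1) * f s‖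
      = x ^ (-p) * ‖∫ s in (0:ℝ)..x, s ^ (τ - 1) * f s‖ := by
        rw [norm_mul, norm_of_nonneg (rpow_nonneg hx.1.le _)]
    _ ≤ x ^ (-p) * (M * x ^ τ / τ) :=
        mul_le_mul_of_nonneg_left (norm_integral_rpow_mul_le hτ hx.1.le
          fun s hs => hf s ⟨hs.1, hs.2.trans hx.2.le⟩) (rpow_nonneg hx.1.le _)
    _ = M / τ * x ^ (τ - p) := by
        rw [sub_eq_add_neg, rpow_add hx.1]
        ring

theorem hasDerivAt_integral_of_continuousOn_Ico {f : ℝ → ℝ} {a b x : ℝ}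
    (hf : ContinuousOn f (Ico a b)) (hx : x ∈ Ioo a b) :
    HasDerivAt (fun y => ∫ s in a..y, f s) (f x) x :=
  intervalIntegral.integral_hasDerivAt_right
    ((hf.mono (Icc_subset_Ico_right hx.2)).intervalIntegrable_of_Icc hx.1.le)
    ((hf.mono Ioo_subset_Ico_self).stronglyMeasurableAtFilter isOpen_Ioo x hx)
    (hf.continuousAt (Ico_mem_nhds hx.1 hx.2))

/-- `(v')^θ` for a solution `v` of (★). -/
noncomputable def cauchyPotential (C q τ θ : ℝ) (g v : ℝ → ℝ) (r : ℝ) : ℝ :=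
  C ^ θ * (r ^ (-(q * θ)) * ∫ s in (0:ℝ)..r, s ^ (τ - 1) * g (v s))

section cauchyPotential

variable {C q τ θ R x : ℝ} {g v : ℝ → ℝ}

theorem integral_rpow_mul_comp_nonneg (hg : ∀ t, 0 ≤ g t) (hx : 0 ≤ x) :
    0 ≤ ∫ s in (0:ℝ)..x, s ^ (τ - 1) * g (v s) :=
  intervalIntegral.integral_nonneg hx fun _ hs => mul_nonneg (rpow_nonneg hs.1 _) (hg _)

theorem cauchyPotential_nonneg (hC : 0 ≤ C) (hg : ∀ t, 0 ≤ g t) (hx : 0 ≤ x) :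
    0 ≤ cauchyPotential C q τ θ g v x :=
  mul_nonneg (rpow_nonneg hC _)
    (mul_nonneg (rpow_nonneg hx _) (integral_rpow_mul_comp_nonneg hg hx))

theorem cauchyRHS_eq_cauchyPotential_rpow (hC : 0 ≤ C) (hθ : θ ≠ 0) (hg : ∀ t, 0 ≤ g t)
    (hx : 0 < x) : cauchyRHS C q τ θ g v x = cauchyPotential C q τ θ g v x ^ (1 / θ) := by
  have hF := integral_rpow_mul_comp_nonneg (τ := τ) (v := v) hg hx.le
  rw [cauchyRHS, cauchyPotential, mul_rpow (rpow_nonneg hC _)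
      (mul_nonneg (rpow_nonneg hx.le _) hF), mul_rpow (rpow_nonneg hx.le _) hF,
    ← rpow_mul hC, ← rpow_mul hx.le, neg_mul, mul_assoc q, mul_one_div_cancel hθ, mul_one,
    Real.rpow_one, mul_assoc]

theorem exists_hasDerivAt_cauchyPotential_le (hC : 0 ≤ C) (hq : 0 ≤ q) (hθ : 0 ≤ θ)
    (hτ : θ * q + 1 ≤ τ) (hg : Continuous g) (hg_nonneg : ∀ t, 0 ≤ g t)
    (hv : ContinuousOn v (Ico 0 R)) (hx : x ∈ Ioo 0 R) :
    ∃ P', HasDerivAt (cauchyPotential C q τ θ g v) P' x ∧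
      P' ≤ C ^ θ * R ^ (τ - q * θ - 1) * g (v x) := by
  have hF := hasDerivAt_integral_of_continuousOn_Ico (f := fun s => s ^ (τ - 1) * g (v s))
    (((continuous_rpow_const (by nlinarith : 0 ≤ τ - 1)).continuousOn).mul
      (hg.comp_continuousOn hv)) hx
  refine ⟨_, ((hasDerivAt_rpow_const (Or.inl hx.1.ne')).mul hF).const_mul (C ^ θ), ?_⟩
  have hdecay : -(q * θ) * x ^ (-(q * θ) - 1) * ∫ s in (0:ℝ)..x, s ^ (τ - 1) * g (v s) ≤ 0 :=
    mul_nonpos_of_nonpos_of_nonneg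
      (mul_nonpos_of_nonpos_of_nonneg (by nlinarith) (rpow_nonneg hx.1.le _))
      (integral_rpow_mul_comp_nonneg hg_nonneg hx.1.le)
  have hgrowth : x ^ (-(q * θ)) * (x ^ (τ - 1) * g (v x)) ≤ R ^ (τ - q * θ - 1) * g (v x) := by
    rw [← mul_assoc, ← rpow_add hx.1, show -(q * θ) + (τ - 1) = τ - q * θ - 1 by ring]
    gcongr
    · exact hg_nonneg _
    · exact hx.1.le
    · nlinarith
    · exact hx.2.le
  rw [mul_assoc (C ^ θ)]
  exact mul_le_mul_of_nonneg_left (by linarith) (rpow_nonneg hC _)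

theorem tendsto_cauchyPotential_nhdsGT_zero (hg : Continuous g) (hv : ContinuousOn v (Ico 0 R))
    (hR : 0 < R) (hτ : 0 < τ) (hqτ : q * θ < τ) :
    Tendsto (cauchyPotential C q τ θ g v) (𝓝[>] 0) (𝓝 0) := by
  obtain ⟨M, hM⟩ := isCompact_Icc.exists_bound_of_continuousOn
    (hg.comp_continuousOn (hv.mono (Icc_subset_Ico_right (half_lt_self hR))))
  have := (tendsto_rpow_neg_mul_integral_rpow_mul_nhdsGT_zero (f := fun s => g (v s)) hτ hqτ
    (half_pos hR) fun s hs => hM s (Ioc_subset_Icc_self hs)).const_mul (C ^ θ)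
  rwa [mul_zero] at this

end cauchyPotential

namespace SolvesCauchy

variable {C q τ θ a R x : ℝ} {g v : ℝ → ℝ}

theorem continuousOn_Ico (hv : SolvesCauchy C q τ θ a g (ENNReal.ofReal R) v) :
    ContinuousOn v (Ico 0 R) :=
  hv.1.mono fun _ hx => ⟨hx.1, ENNReal.ofReal_lt_ofReal_iff'.2 ⟨hx.2, hx.1.trans_lt hx.2⟩⟩

theorem hasDerivAt (hv : SolvesCauchy C q τ θ a g (ENNReal.ofReal R) v) (hx : x ∈ Ioo 0 R) :
    HasDerivAt v (cauchyRHS C q τ θ g v x) x :=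
  hv.2.2 x hx.1 (ENNReal.ofReal_lt_ofReal_iff'.2 ⟨hx.2, hx.1.trans hx.2⟩)

theorem tendsto_nhdsGT_zero (hv : SolvesCauchy C q τ θ a g (ENNReal.ofReal R) v) (hR : 0 < R) :
    Tendsto v (𝓝[>] 0) (𝓝 a) := by
  have := ((hv.continuousOn_Ico 0 ⟨le_rfl, hR⟩).mono Ioo_subset_Ico_self).tendsto
  rwa [nhdsWithin_Ioo_eq_nhdsGT hR, hv.2.1] at this

end SolvesCauchy

theorem gradient_bound_general
    (g : ℝ → ℝ) (hg_cont : Continuous g) (hg_pos : ∀ t, 0 < g t)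
    (C q θ τ a : ℝ) (hC : 0 < C) (hq : 0 ≤ q) (hθ : 0 < θ) (hτ : θ * q + 1 ≤ τ)
    (R : ℝ) (hR : 0 < R) (v : ℝ → ℝ)
    (hv : SolvesCauchy C q τ θ a g (ENNReal.ofReal R) v) :
    ∀ r ∈ Set.Ioo 0 R,
      (deriv v r) ^ (θ + 1) ≤
        (θ + 1) / θ * C ^ θ * R ^ (τ - q * θ - 1) * ∫ s in a..(v r), g s := by
  rintro r ⟨hr0, hrR⟩
  have hg_nonneg : ∀ t, 0 ≤ g t := fun t => (hg_pos t).le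
  have hqθ : 0 ≤ q * θ := mul_nonneg hq hθ.le
  have hsub : ∀ x ∈ Ioc 0 r, x ∈ Ioo 0 R := fun x hx => ⟨hx.1, hx.2.trans_lt hrR⟩
  have hp : (θ + 1) / θ - 1 = 1 / θ := by field_simp; ring
  have key := rpow_le_mul_integral_of_hasDerivAt (p := (θ + 1) / θ)
    (B := C ^ θ * R ^ (τ - q * θ - 1))
    (by rw [le_div_iff₀ hθ]; linarith) hg_cont hr0
    (fun x hx => cauchyPotential_nonneg hC.le hg_nonneg hx.1.le)
    (fun x hx => exists_hasDerivAt_cauchyPotential_le hC.le hq hθ.le hτ hg_cont hg_nonneg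
      hv.continuousOn_Ico (hsub x hx))
    (fun x hx => by
      rw [hp, ← cauchyRHS_eq_cauchyPotential_rpow hC.le hθ.ne' hg_nonneg hx.1]
      exact hv.hasDerivAt (hsub x hx))
    (tendsto_cauchyPotential_nhdsGT_zero hg_cont hv.continuousOn_Ico hR (by linarith)
      (by linarith))
    (hv.tendsto_nhdsGT_zero hR)
  rw [(hv.hasDerivAt ⟨hr0, hrR⟩).deriv,
    cauchyRHS_eq_cauchyPotential_rpow hC.le hθ.ne' hg_nonneg hr0,
    ← rpow_mul (cauchyPotential_nonneg hC.le hg_nonneg hr0.le), one_div_mul_eq_div]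
  linarith

/-- Gradient bound (3.2)–(3.3) in the proof of Theorem 1.2: if `τ ≥ θq + 1` and `v`
solves (★) on `[0, R)` (`R` finite) with right derivative `0` at the origin, then
`(v'(r))^{θ+1} ≤ ((θ+1)/θ) C^θ R^{τ-qθ-1} ∫_a^{v(r)} g(s) ds` for `r ∈ (0, R)`. -/
theorem gradient_bound
    (g : ℝ → ℝ) (hg_cont : Continuous g) (hg_mono : Monotone g) (hg_pos : ∀ t, 0 < g t)
    (C q θ τ a : ℝ) (hC : 0 < C) (hq : 0 ≤ q) (hθ : 0 < θ) (hτ : θ * q + 1 ≤ τ)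
    (R : ℝ) (hR : 0 < R) (v : ℝ → ℝ)
    (hv : SolvesCauchy C q τ θ a g (ENNReal.ofReal R) v)
    (hv0 : HasDerivWithinAt v 0 (Set.Ici 0) 0) :
    ∀ r ∈ Set.Ioo 0 R,
      (deriv v r) ^ (θ + 1) ≤
        (θ + 1) / θ * C ^ θ * R ^ (τ - q * θ - 1) * ∫ s in a..(v r), g s :=
  gradient_bound_general g hg_cont hg_pos C q θ τ a hC hq hθ hτ R hR v hv
end

section
/- Let g : ℝ → ℝ be continuous, non-decreasing and everywhere positive, let C > 0, q ≥ 0, θ > 0 and τ > θq be constants, let R ∈ (0,∞], and let v : [0,R) → ℝ solve the Cauchy problem (★) with v(0) = a. Then lim_{r→0⁺} v'(r) / r^{(τ − θq)/θ} = C · (g(a)/τ)^{1/θ}. -/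
open Real MeasureTheory Set Filter Topology ENNReal

/-! By L'Hôpital's rule, with `d/dr ∫_0^r s^{τ-1} g(v s) ds = r^{τ-1} g(v r)` and
`d/dr r^τ = τ r^{τ-1}`, the ratio `r^{-τ} ∫_0^r s^{τ-1} g(v s) ds` tends to
`g(v 0)/τ = g(a)/τ`. By (★), `v'(r) / r^{(τ-θq)/θ}` is `C` times the `1/θ`-th power of
this ratio. -/

theorem tendsto_integral_rpow_mul_div_rpow_nhdsGT {w : ℝ → ℝ} {τ b : ℝ} (hτ : 0 < τ)
    (hb : 0 < b) (hw : ContinuousOn w (Icc 0 b)) :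
    Tendsto (fun r => (∫ s in (0:ℝ)..r, s ^ (τ - 1) * w s) / r ^ τ) (𝓝[>] 0)
      (𝓝 (w 0 / τ)) := by
  have hint : IntervalIntegrable (fun s => s ^ (τ - 1) * w s) volume 0 b :=
    (intervalIntegral.intervalIntegrable_rpow' (by linarith)).mul_continuousOn
      (by rwa [uIcc_of_le hb.le])
  have hcont : ContinuousOn (fun s => s ^ (τ - 1) * w s) (Ioo 0 b) :=
    (continuousOn_id.rpow_const fun s hs => Or.inl hs.1.ne').mul (hw.mono Ioo_subset_Icc_self)
  refine HasDerivAt.lhopital_zero_right_on_Ico hb (f' := fun r => r ^ (τ - 1) * w r)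
    (g' := fun r => τ * r ^ (τ - 1)) (fun r hr => ?_)
    (fun r hr => hasDerivAt_rpow_const (Or.inl hr.1.ne')) ?_ ?_
    (fun r hr => by have := hr.1; positivity) (by simp) (zero_rpow hτ.ne') ?_
  · have hsub : uIcc 0 r ⊆ uIcc 0 b := by
      rw [uIcc_of_le hb.le, uIcc_of_le hr.1.le]
      exact Icc_subset_Icc_right hr.2.le
    exact intervalIntegral.integral_hasDerivAt_right (hint.mono_set hsub)
      (hcont.stronglyMeasurableAtFilter isOpen_Ioo r hr)
      (hcont.continuousAt (Ioo_mem_nhds hr.1 hr.2))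
  · have hprim := intervalIntegral.continuousOn_primitive_interval' hint left_mem_uIcc
    rw [uIcc_of_le hb.le] at hprim
    exact hprim.mono Ico_subset_Icc_self
  · exact continuousOn_id.rpow_const fun _ _ => Or.inr hτ.le
  · have hw0 : Tendsto w (𝓝[>] 0) (𝓝 (w 0)) :=
      ((hw 0 ⟨le_rfl, hb.le⟩).mono_of_mem_nhdsWithin (Icc_mem_nhdsGT hb)).tendsto
    refine (hw0.div_const τ).congr' ?_
    filter_upwards [self_mem_nhdsWithin] with r (hr : 0 < r)
    field_simp

theorem cauchyRHS_div_rpow {C q τ θ r : ℝ} {g v : ℝ → ℝ} (hθ : θ ≠ 0) (hr : 0 < r)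
    (hI : 0 ≤ ∫ s in (0:ℝ)..r, s ^ (τ - 1) * g (v s)) :
    cauchyRHS C q τ θ g v r / r ^ ((τ - θ * q) / θ) =
      C * ((∫ s in (0:ℝ)..r, s ^ (τ - 1) * g (v s)) / r ^ τ) ^ (1 / θ) := by
  have hexp : (τ - θ * q) / θ = τ * (1 / θ) + -q := by field_simp; ring
  rw [cauchyRHS, hexp, rpow_add hr, div_rpow hI (rpow_nonneg hr.le τ), ← rpow_mul hr.le]
  have hrq : 0 < r ^ (-q) := rpow_pos_of_pos hr _
  field_simp

theorem ENNReal.exists_pos_ofReal_lt {R : ℝ≥0∞} (hR : 0 < R) :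
    ∃ b : ℝ, 0 < b ∧ ENNReal.ofReal b < R := by
  obtain ⟨b, -, hb0, hbR⟩ := ENNReal.lt_iff_exists_real_btwn.1 hR
  exact ⟨b, ENNReal.ofReal_pos.1 hb0, hbR⟩

theorem first_deriv_asymptotics_general
    (g : ℝ → ℝ) (hg_cont : Continuous g) (hg_pos : ∀ t, 0 < g t)
    (C q θ τ a : ℝ) (hq : 0 ≤ q) (hθ : 0 < θ) (hτ : θ * q < τ)
    (R : ℝ≥0∞) (hR : 0 < R) (v : ℝ → ℝ)
    (hv : SolvesCauchy C q τ θ a g R v) :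
    Tendsto (fun r => deriv v r / r ^ ((τ - θ * q) / θ)) (𝓝[>] 0)
      (𝓝 (C * (g a / τ) ^ (1 / θ))) := by
  obtain ⟨hv_cont, hv0, hv_deriv⟩ := hv
  have hτ0 : 0 < τ := (mul_nonneg hθ.le hq).trans_lt hτ
  obtain ⟨b, hb, hbR⟩ := ENNReal.exists_pos_ofReal_lt hR
  have hbR' : ∀ r ∈ Icc 0 b, ENNReal.ofReal r < R := fun r hr =>
    (ENNReal.ofReal_le_ofReal hr.2).trans_lt hbR
  have hratio := tendsto_integral_rpow_mul_div_rpow_nhdsGT hτ0 hb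
    (hg_cont.comp_continuousOn (hv_cont.mono fun r hr => ⟨hr.1, hbR' r hr⟩))
  rw [Function.comp_apply, hv0] at hratio
  have hpow : ContinuousAt (fun x => C * x ^ (1 / θ)) (g a / τ) :=
    continuousAt_const.mul (continuousAt_rpow_const _ _ (Or.inr (by positivity)))
  refine (hpow.tendsto.comp hratio).congr' ?_
  filter_upwards [Ioo_mem_nhdsGT hb] with r hr
  have hI : 0 ≤ ∫ s in (0:ℝ)..r, s ^ (τ - 1) * g (v s) :=
    intervalIntegral.integral_nonneg hr.1.le fun s hs =>
      mul_nonneg (rpow_nonneg hs.1 _) (hg_pos _).le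
  rw [(hv_deriv r hr.1 (hbR' r (Ioo_subset_Icc_self hr))).deriv,
    cauchyRHS_div_rpow hθ.ne' hr.1 hI]
  rfl

/-- The asymptotic (2.25) in the proof of Lemma 2.2:
`v'(r)/r^{(τ-θq)/θ} → C (g(a)/τ)^{1/θ}` as `r → 0⁺`. -/
theorem first_deriv_asymptotics
    (g : ℝ → ℝ) (hg_cont : Continuous g) (hg_mono : Monotone g) (hg_pos : ∀ t, 0 < g t)
    (C q θ τ a : ℝ) (hC : 0 < C) (hq : 0 ≤ q) (hθ : 0 < θ) (hτ : θ * q < τ)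
    (R : ℝ≥0∞) (hR : 0 < R) (v : ℝ → ℝ)
    (hv : SolvesCauchy C q τ θ a g R v) :
    Tendsto (fun r => deriv v r / r ^ ((τ - θ * q) / θ)) (𝓝[>] 0)
      (𝓝 (C * (g a / τ) ^ (1 / θ))) :=
  first_deriv_asymptotics_general g hg_cont hg_pos C q θ τ a hq hθ hτ R hR v hv
end

section
/- Let g : ℝ → ℝ be continuous, non-decreasing and everywhere positive, let C > 0, q ≥ 0, θ > 0 and τ be constants with θq < τ < θq + 1, let ε ∈ (0, τ − θq) and set κ := (1 − ε)/(τ − θq − ε). Let R ∈ (0,∞) and let v : [0,R) → ℝ solve the Cauchy problem (★) with v(0) = a and right derivative v'(0) = 0 at the origin. Then for every r ∈ (0,R): (v'(r))^{θ + 1/κ} ≤ ((θ + 1/κ)/θ) · C^θ · (R^ε/ε)^{(θq + 1 − τ)/(1 − ε)} · (∫_a^{v(r)} g(s)^κ ds)^{1/κ}. -/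
open Real MeasureTheory Set Filter Topology ENNReal

namespace MeasureTheory

variable {α : Type*} [MeasurableSpace α] {μ : Measure α}

theorem memLp_ofReal_of_integrable_rpow {p : ℝ} (hp : 0 < p) {f : α → ℝ} (hf : 0 ≤ᵐ[μ] f)
    (hfp : Integrable (fun x => f x ^ p) μ) : MemLp f (ENNReal.ofReal p) μ := by
  have hmeas : AEStronglyMeasurable f μ := by
    refine ((continuous_rpow_const (one_div_nonneg.2 hp.le)).comp_aestronglyMeasurable
      hfp.1).congr ?_
    filter_upwards [hf] with x hx
    simp [← rpow_mul hx, hp.ne']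
  rw [← integrable_norm_rpow_iff hmeas (by simpa using hp) ofReal_ne_top, toReal_ofReal hp.le]
  refine hfp.congr ?_
  filter_upwards [hf] with x hx
  rw [norm_of_nonneg hx]

theorem integral_le_Lp_mul_Lq_of_le_mul {p q : ℝ} (hpq : p.HolderConjugate q) {φ f g : α → ℝ}
    (hφ : 0 ≤ᵐ[μ] φ) (hφfg : φ ≤ᵐ[μ] f * g) (hf : 0 ≤ᵐ[μ] f) (hg : 0 ≤ᵐ[μ] g)
    (hfp : Integrable (fun x => f x ^ p) μ) (hgq : Integrable (fun x => g x ^ q) μ) :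
    ∫ x, φ x ∂μ ≤ (∫ x, f x ^ p ∂μ) ^ (1 / p) * (∫ x, g x ^ q ∂μ) ^ (1 / q) := by
  have hfL := memLp_ofReal_of_integrable_rpow hpq.pos hf hfp
  have hgL := memLp_ofReal_of_integrable_rpow hpq.symm.pos hg hgq
  have := hpq.ennrealOfReal
  calc ∫ x, φ x ∂μ ≤ ∫ x, f x * g x ∂μ := integral_mono_of_nonneg hφ (hfL.integrable_mul hgL) hφfg
    _ ≤ _ := integral_mul_le_Lp_mul_Lq_of_nonneg hpq hf hg hfL hgL

end MeasureTheory

namespace intervalIntegral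

variable {a b : ℝ} {f f' g : ℝ → ℝ}

theorem integral_eq_sub_of_hasDerivAt_of_nonneg (hab : a ≤ b)
    (hcont : ContinuousOn f (Icc a b)) (hderiv : ∀ x ∈ Ioo a b, HasDerivAt f (f' x) x)
    (hpos : ∀ x ∈ Ioo a b, 0 ≤ f' x) : ∫ x in a..b, f' x = f b - f a :=
  integral_eq_sub_of_hasDerivAt_of_le hab hcont hderiv
    ((intervalIntegrable_iff_integrableOn_Ioc_of_le hab).2
      (integrableOn_deriv_of_nonneg hcont hderiv hpos))

theorem intervalIntegrable_rpow_sub_one_mul {τ r : ℝ} {h : ℝ → ℝ} (hτ : 0 < τ) (hr : 0 ≤ r)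
    (hh : ContinuousOn h (Icc 0 r)) :
    IntervalIntegrable (fun s => s ^ (τ - 1) * h s) volume 0 r := by
  rw [intervalIntegrable_iff_integrableOn_Icc_of_le hr]
  refine IntegrableOn.mul_continuousOn ?_ hh isCompact_Icc
  rw [← intervalIntegrable_iff_integrableOn_Icc_of_le hr]
  exact intervalIntegrable_rpow' (by linarith)

theorem hasDerivAt_integral_comp (hg : Continuous g) (c : ℝ) {x : ℝ}
    (hf : HasDerivAt f (f' x) x) :
    HasDerivAt (fun x => ∫ u in c..f x, g u) (g (f x) * f' x) x :=
  (hg.integral_hasStrictDerivAt c (f x)).hasDerivAt.comp x hf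

theorem continuousOn_integral_comp (hg : Continuous g) (c : ℝ) {s : Set ℝ}
    (hf : ContinuousOn f s) : ContinuousOn (fun x => ∫ u in c..f x, g u) s :=
  (continuous_primitive (fun _ _ => hg.intervalIntegrable _ _) c).comp_continuousOn hf

theorem integrableOn_comp_mul_deriv_of_nonneg (hf : ContinuousOn f (Icc a b))
    (hff' : ∀ x ∈ Ioo a b, HasDerivAt f (f' x) x) (hf' : ∀ x ∈ Ioo a b, 0 ≤ f' x)
    (hg : Continuous g) (hg0 : ∀ x, 0 ≤ g x) :
    IntegrableOn (fun x => g (f x) * f' x) (Ioc a b) :=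
  integrableOn_deriv_of_nonneg (continuousOn_integral_comp hg a hf)
    (fun x hx => hasDerivAt_integral_comp hg a (hff' x hx))
    (fun x hx => mul_nonneg (hg0 _) (hf' x hx))

theorem integral_comp_mul_deriv_of_nonneg (hab : a ≤ b) (hf : ContinuousOn f (Icc a b))
    (hff' : ∀ x ∈ Ioo a b, HasDerivAt f (f' x) x) (hf' : ∀ x ∈ Ioo a b, 0 ≤ f' x)
    (hg : Continuous g) (hg0 : ∀ x, 0 ≤ g x) :
    ∫ x in a..b, g (f x) * f' x = ∫ u in f a..f b, g u := by
  rw [integral_eq_sub_of_hasDerivAt_of_nonneg hab (continuousOn_integral_comp hg (f a) hf)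
    (fun x hx => hasDerivAt_integral_comp hg (f a) (hff' x hx))
    (fun x hx => mul_nonneg (hg0 _) (hf' x hx)), integral_same, sub_zero]

end intervalIntegral

section CauchyProblem

variable {C q τ θ a r : ℝ} {g v : ℝ → ℝ}

noncomputable def cauchyPrimitive (τ : ℝ) (g v : ℝ → ℝ) (r : ℝ) : ℝ :=
  ∫ s in (0:ℝ)..r, s ^ (τ - 1) * g (v s)

theorem cauchyRHS_rpow {s : ℝ} (hC : 0 ≤ C) (hs : 0 ≤ s) (hF : 0 ≤ cauchyPrimitive τ g v s)
    (t : ℝ) :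
    cauchyRHS C q τ θ g v s ^ t = C ^ t * s ^ (-q * t) * cauchyPrimitive τ g v s ^ (t / θ) := by
  rw [cauchyRHS, ← cauchyPrimitive, mul_rpow (by positivity) (by positivity),
    mul_rpow hC (by positivity), ← rpow_mul hs, ← rpow_mul hF, one_div_mul_eq_div]

theorem intervalIntegrable_cauchyIntegrand (hτ : 0 < τ) (hg : Continuous g)
    (hv : ContinuousOn v (Icc 0 r)) {s : ℝ} (hs : s ∈ Icc 0 r) :
    IntervalIntegrable (fun s => s ^ (τ - 1) * g (v s)) volume 0 s :=
  intervalIntegral.intervalIntegrable_rpow_sub_one_mul hτ hs.1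
    (hg.comp_continuousOn (hv.mono (Icc_subset_Icc_right hs.2)))

theorem continuousOn_cauchyPrimitive (hτ : 0 < τ) (hg : Continuous g)
    (hv : ContinuousOn v (Icc 0 r)) (hr : 0 ≤ r) :
    ContinuousOn (cauchyPrimitive τ g v) (Icc 0 r) := by
  rw [← uIcc_of_le hr]
  exact intervalIntegral.continuousOn_primitive_interval'
    (intervalIntegrable_cauchyIntegrand hτ hg hv (right_mem_Icc.2 hr)) left_mem_uIcc

theorem hasDerivAt_cauchyPrimitive (hτ : 0 < τ) (hg : Continuous g)
    (hv : ContinuousOn v (Icc 0 r)) {s : ℝ} (hs : s ∈ Ioo 0 r) :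
    HasDerivAt (cauchyPrimitive τ g v) (s ^ (τ - 1) * g (v s)) s := by
  have hcont : ContinuousOn (fun s => s ^ (τ - 1) * g (v s)) (Ioo 0 r) :=
    (continuousOn_id.rpow_const fun _ hx => Or.inl hx.1.ne').mul
      (hg.comp_continuousOn (hv.mono Ioo_subset_Icc_self))
  exact intervalIntegral.integral_hasDerivAt_right
    (intervalIntegrable_cauchyIntegrand hτ hg hv (Ioo_subset_Icc_self hs))
    (hcont.stronglyMeasurableAtFilter isOpen_Ioo s hs) (hcont.continuousAt (isOpen_Ioo.mem_nhds hs))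

theorem cauchyPrimitive_pos (hτ : 0 < τ) (hg : Continuous g)
    (hv : ContinuousOn v (Icc 0 r)) (hg_pos : ∀ t, 0 < g t) {s : ℝ} (hs : s ∈ Ioc 0 r) :
    0 < cauchyPrimitive τ g v s :=
  intervalIntegral.intervalIntegral_pos_of_pos_on
    (intervalIntegrable_cauchyIntegrand hτ hg hv (Ioc_subset_Icc_self hs))
    (fun _ hx => mul_pos (rpow_pos_of_pos hx.1 _) (hg_pos _)) hs.1

theorem cauchyPrimitive_rpow_eq (hτ : 0 < τ) (hg : Continuous g) (hg_pos : ∀ t, 0 < g t)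
    (hv : ContinuousOn v (Icc 0 r)) (hr : 0 ≤ r) {γ : ℝ} (hγ : 1 ≤ γ) :
    cauchyPrimitive τ g v r ^ γ =
      γ * ∫ s in (0:ℝ)..r, cauchyPrimitive τ g v s ^ (γ - 1) * (s ^ (τ - 1) * g (v s)) := by
  have hFTC := intervalIntegral.integral_eq_sub_of_hasDerivAt_of_nonneg hr
    ((continuousOn_cauchyPrimitive hτ hg hv hr).rpow_const fun _ _ => Or.inr (by linarith))
    (fun s hs => ((hasDerivAt_cauchyPrimitive hτ hg hv hs).rpow_const (Or.inr hγ)))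
    (fun s hs => mul_nonneg (mul_nonneg (mul_nonneg (rpow_nonneg hs.1.le _) (hg_pos _).le)
      (by linarith)) (rpow_nonneg (cauchyPrimitive_pos hτ hg hv hg_pos
        (Ioo_subset_Ioc_self hs)).le _))
  have hF0 : cauchyPrimitive τ g v 0 = 0 := intervalIntegral.integral_same
  rw [hF0, zero_rpow (by linarith), sub_zero] at hFTC
  rw [← hFTC, ← intervalIntegral.integral_const_mul]
  congr 1 with s
  ring

theorem cauchyPrimitive_rpow_deriv_le {κ s : ℝ} (hC : 0 ≤ C) (hq : 0 ≤ q) (hθ : 0 < θ)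
    (hκ : 0 < κ) (hs : 0 < s) (hsr : s ≤ r) (hF : 0 ≤ cauchyPrimitive τ g v s) (hgv : 0 ≤ g (v s)) :
    C ^ (1 / κ) * r ^ (-q * (θ + 1 / κ)) *
        (cauchyPrimitive τ g v s ^ (1 / κ / θ) * (s ^ (τ - 1) * g (v s))) ≤
      s ^ (τ - 1 - θ * q) * (g (v s) * cauchyRHS C q τ θ g v s ^ (1 / κ)) := by
  have hsplit : s ^ (-q * (θ + 1 / κ)) = s ^ (-q * θ) * s ^ (-q * (1 / κ)) := by
    rw [mul_add, rpow_add hs]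
  have hτθq : s ^ (τ - 1 - θ * q) = s ^ (τ - 1) * s ^ (-q * θ) := by
    rw [← rpow_add hs]; ring_nf
  calc _ ≤ C ^ (1 / κ) * s ^ (-q * (θ + 1 / κ)) *
        (cauchyPrimitive τ g v s ^ (1 / κ / θ) * (s ^ (τ - 1) * g (v s))) := by
        refine mul_le_mul_of_nonneg_right (mul_le_mul_of_nonneg_left ?_ (rpow_nonneg hC _))
          (mul_nonneg (rpow_nonneg hF _) (mul_nonneg (rpow_nonneg hs.le _) hgv))
        exact rpow_le_rpow_of_nonpos hs hsr
          (mul_nonpos_of_nonpos_of_nonneg (neg_nonpos.2 hq) (by positivity))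
    _ = _ := by
        rw [cauchyRHS_rpow hC hs.le hF, hsplit, hτθq]
        ring

theorem cauchyRHS_rpow_eq_integral (hg : Continuous g) (hg_pos : ∀ t, 0 < g t) (hC : 0 < C)
    (hθ : 0 < θ) (hτ : 0 < τ) {κ : ℝ} (hκ : 0 < κ) (hr : 0 < r)
    (hv : ContinuousOn v (Icc 0 r)) :
    cauchyRHS C q τ θ g v r ^ (θ + 1 / κ) = (θ + 1 / κ) / θ * C ^ θ * ∫ s in Ioc 0 r,
      C ^ (1 / κ) * r ^ (-q * (θ + 1 / κ)) *
        (cauchyPrimitive τ g v s ^ (1 / κ / θ) * (s ^ (τ - 1) * g (v s))) := by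
  have hγ : 1 ≤ (θ + 1 / κ) / θ := (le_div_iff₀ hθ).2 (by linarith [one_div_pos.2 hκ])
  have hγ_sub : (θ + 1 / κ) / θ - 1 = 1 / κ / θ := by field_simp; ring
  rw [cauchyRHS_rpow hC.le hr.le (cauchyPrimitive_pos hτ hg hv hg_pos ⟨hr, le_rfl⟩).le,
    cauchyPrimitive_rpow_eq hτ hg hg_pos hv hr.le hγ, hγ_sub,
    intervalIntegral.integral_of_le hr.le, integral_const_mul, rpow_add hC]
  ring

theorem integral_cauchyPrimitive_rpow_deriv_le (hg : Continuous g) (hg_pos : ∀ t, 0 < g t)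
    (hC : 0 ≤ C) (hq : 0 ≤ q) (hθ : 0 < θ) (hτ : 0 < τ) {p κ ε R : ℝ}
    (hpκ : p.HolderConjugate κ) (hε : 0 < ε) (hpε : (τ - 1 - θ * q) * p = ε - 1) (hr : 0 < r)
    (hrR : r ≤ R) (hv : ContinuousOn v (Icc 0 r)) (hv0 : v 0 = a)
    (hv' : ∀ s ∈ Ioo 0 r, HasDerivAt v (cauchyRHS C q τ θ g v s) s) :
    ∫ s in Ioc 0 r, C ^ (1 / κ) * r ^ (-q * (θ + 1 / κ)) *
        (cauchyPrimitive τ g v s ^ (1 / κ / θ) * (s ^ (τ - 1) * g (v s))) ≤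
      (R ^ ε / ε) ^ (1 / p) * (∫ u in a..v r, g u ^ κ) ^ (1 / κ) := by
  set F := cauchyPrimitive τ g v
  set w := cauchyRHS C q τ θ g v
  have hκ : 0 < κ := hpκ.symm.pos
  have hF : ∀ s ∈ Ioc 0 r, 0 < F s := fun s hs => cauchyPrimitive_pos hτ hg hv hg_pos hs
  have hw : ∀ s ∈ Ioc 0 r, 0 ≤ w s := fun s hs =>
    mul_nonneg (mul_nonneg hC (rpow_nonneg hs.1.le _)) (rpow_nonneg (hF s hs).le _)
  have hw' : ∀ s ∈ Ioo 0 r, 0 ≤ w s := fun s hs => hw s (Ioo_subset_Ioc_self hs)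
  have hgκ : Continuous fun u => g u ^ κ := hg.rpow_const fun u => Or.inl (hg_pos u).ne'
  have hgκ_nonneg : ∀ u, 0 ≤ g u ^ κ := fun u => rpow_nonneg (hg_pos u).le _
  have hpow : ∀ s ∈ Ioc 0 r, (s ^ (τ - 1 - θ * q)) ^ p = s ^ (ε - 1) := fun s hs => by
    rw [← rpow_mul hs.1.le, hpε]
  have hpowκ : ∀ s ∈ Ioc 0 r, (g (v s) * w s ^ (1 / κ)) ^ κ = g (v s) ^ κ * w s :=
    fun s hs => by
      rw [mul_rpow (hg_pos _).le (rpow_nonneg (hw s hs) _), ← rpow_mul (hw s hs),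
        one_div_mul_cancel hκ.ne', Real.rpow_one]
  have hholder := integral_le_Lp_mul_Lq_of_le_mul hpκ (μ := volume.restrict (Ioc 0 r))
    (ae_restrict_of_forall_mem measurableSet_Ioc fun s hs => mul_nonneg (by positivity)
      (mul_nonneg (rpow_nonneg (hF s hs).le _) (mul_nonneg (rpow_nonneg hs.1.le _)
        (hg_pos _).le)))
    (ae_restrict_of_forall_mem measurableSet_Ioc fun s hs =>
      cauchyPrimitive_rpow_deriv_le hC hq hθ hκ hs.1 hs.2 (hF s hs).le (hg_pos _).le)
    (ae_restrict_of_forall_mem measurableSet_Ioc fun s hs => rpow_nonneg hs.1.le _)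
    (ae_restrict_of_forall_mem measurableSet_Ioc fun s hs =>
      mul_nonneg (hg_pos _).le (rpow_nonneg (hw s hs) _))
    (((intervalIntegrable_iff_integrableOn_Ioc_of_le hr.le).1
      (intervalIntegral.intervalIntegrable_rpow' (by linarith))).congr_fun
        (fun s hs => (hpow s hs).symm) measurableSet_Ioc)
    ((intervalIntegral.integrableOn_comp_mul_deriv_of_nonneg hv hv' hw' hgκ
      hgκ_nonneg).congr_fun (fun s hs => (hpowκ s hs).symm) measurableSet_Ioc)
  have hfp : ∫ s in Ioc 0 r, (s ^ (τ - 1 - θ * q)) ^ p = r ^ ε / ε := by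
    rw [setIntegral_congr_fun measurableSet_Ioc hpow, ← intervalIntegral.integral_of_le hr.le,
      integral_rpow (Or.inl (by linarith)), sub_add_cancel, zero_rpow hε.ne', sub_zero]
  have hhκ : ∫ s in Ioc 0 r, (g (v s) * w s ^ (1 / κ)) ^ κ = ∫ u in a..v r, g u ^ κ := by
    rw [setIntegral_congr_fun measurableSet_Ioc hpowκ, ← intervalIntegral.integral_of_le hr.le,
      intervalIntegral.integral_comp_mul_deriv_of_nonneg hr.le hv hv' hw' hgκ hgκ_nonneg, hv0]
  have hhκ_nonneg : 0 ≤ ∫ s in Ioc 0 r, (g (v s) * w s ^ (1 / κ)) ^ κ :=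
    setIntegral_nonneg measurableSet_Ioc fun s hs =>
      rpow_nonneg (mul_nonneg (hg_pos _).le (rpow_nonneg (hw s hs) _)) _
  rw [← hhκ]
  refine hholder.trans ?_
  rw [hfp]
  gcongr
  exact one_div_nonneg.2 hpκ.nonneg

theorem cauchyRHS_rpow_le (hg : Continuous g) (hg_pos : ∀ t, 0 < g t) (hC : 0 < C) (hq : 0 ≤ q)
    (hθ : 0 < θ) (hτ : 0 < τ) {p κ ε R : ℝ} (hpκ : p.HolderConjugate κ) (hε : 0 < ε)
    (hpε : (τ - 1 - θ * q) * p = ε - 1) (hr : 0 < r) (hrR : r ≤ R)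
    (hv : ContinuousOn v (Icc 0 r)) (hv0 : v 0 = a)
    (hv' : ∀ s ∈ Ioo 0 r, HasDerivAt v (cauchyRHS C q τ θ g v s) s) :
    cauchyRHS C q τ θ g v r ^ (θ + 1 / κ) ≤
      (θ + 1 / κ) / θ * C ^ θ * (R ^ ε / ε) ^ (1 / p) * (∫ u in a..v r, g u ^ κ) ^ (1 / κ) := by
  have hκ : 0 < κ := hpκ.symm.pos
  rw [cauchyRHS_rpow_eq_integral hg hg_pos hC hθ hτ hκ hr hv, mul_assoc _ ((R ^ ε / ε) ^ _)]
  gcongr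
  exact integral_cauchyPrimitive_rpow_deriv_le hg hg_pos hC.le hq hθ hτ hpκ hε hpε hr hrR hv hv0 hv'

end CauchyProblem

theorem holder_gradient_bound_general
    (g : ℝ → ℝ) (hg_cont : Continuous g) (hg_pos : ∀ t, 0 < g t)
    (C q θ τ a : ℝ) (hC : 0 < C) (hq : 0 ≤ q) (hθ : 0 < θ)
    (hτ2 : τ < θ * q + 1)
    (ε : ℝ) (hε1 : 0 < ε) (hε2 : ε < τ - θ * q)
    (R : ℝ) (v : ℝ → ℝ)
    (hv : SolvesCauchy C q τ θ a g (ENNReal.ofReal R) v) :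
    ∀ r ∈ Set.Ioo 0 R,
      (deriv v r) ^ (θ + 1 / ((1 - ε) / (τ - θ * q - ε))) ≤
        (θ + 1 / ((1 - ε) / (τ - θ * q - ε))) / θ * C ^ θ *
          (R ^ ε / ε) ^ ((θ * q + 1 - τ) / (1 - ε)) *
          (∫ s in a..(v r), g s ^ ((1 - ε) / (τ - θ * q - ε))) ^
            (1 / ((1 - ε) / (τ - θ * q - ε))) := by
  rintro r ⟨hr, hrR⟩
  obtain ⟨hv_cont, hv0, hv_deriv⟩ := hv
  have hlt : ∀ s, 0 ≤ s → s < R → ENNReal.ofReal s < ENNReal.ofReal R := fun s hs hsR =>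
    (ofReal_lt_ofReal_iff_of_nonneg hs).2 hsR
  have hα : 0 < θ * q + 1 - τ := by linarith
  have hβ : 0 < τ - θ * q - ε := by linarith
  have h1ε : 0 < 1 - ε := by linarith
  have hpκ : ((1 - ε) / (θ * q + 1 - τ)).HolderConjugate ((1 - ε) / (τ - θ * q - ε)) := by
    simpa only [inv_div] using Real.HolderConjugate.inv_inv (div_pos hα h1ε) (div_pos hβ h1ε)
      (by field_simp; ring)
  rw [(hv_deriv r hr (hlt r hr.le hrR)).deriv, ← one_div_div (1 - ε)]
  exact cauchyRHS_rpow_le hg_cont hg_pos hC hq hθ (by nlinarith [mul_nonneg hθ.le hq]) hpκ hε1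
    (by field_simp; ring) hr hrR.le
    (hv_cont.mono fun s hs => ⟨hs.1, hlt s hs.1 (hs.2.trans_lt hrR)⟩) hv0
    (fun s hs => hv_deriv s hs.1 (hlt s hs.1.le (hs.2.trans hrR)))

/-- The Hölder-inequality gradient bound (3.16) in the proof of Theorem 1.3: with
`θq < τ < θq + 1`, `ε ∈ (0, τ - θq)` and `κ = (1-ε)/(τ-θq-ε)`, every solution of (★)
on `[0, R)` with right derivative `0` at the origin satisfies, for `r ∈ (0, R)`,
`(v'(r))^{θ+1/κ} ≤ ((θ+1/κ)/θ) C^θ (R^ε/ε)^{(θq+1-τ)/(1-ε)} (∫_a^{v(r)} g^κ)^{1/κ}`. -/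
theorem holder_gradient_bound
    (g : ℝ → ℝ) (hg_cont : Continuous g) (hg_mono : Monotone g) (hg_pos : ∀ t, 0 < g t)
    (C q θ τ a : ℝ) (hC : 0 < C) (hq : 0 ≤ q) (hθ : 0 < θ)
    (hτ1 : θ * q < τ) (hτ2 : τ < θ * q + 1)
    (ε : ℝ) (hε1 : 0 < ε) (hε2 : ε < τ - θ * q)
    (R : ℝ) (hR : 0 < R) (v : ℝ → ℝ)
    (hv : SolvesCauchy C q τ θ a g (ENNReal.ofReal R) v)
    (hv0 : HasDerivWithinAt v 0 (Set.Ici 0) 0) :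
    ∀ r ∈ Set.Ioo 0 R,
      (deriv v r) ^ (θ + 1 / ((1 - ε) / (τ - θ * q - ε))) ≤
        (θ + 1 / ((1 - ε) / (τ - θ * q - ε))) / θ * C ^ θ *
          (R ^ ε / ε) ^ ((θ * q + 1 - τ) / (1 - ε)) *
          (∫ s in a..(v r), g s ^ ((1 - ε) / (τ - θ * q - ε))) ^
            (1 / ((1 - ε) / (τ - θ * q - ε))) :=
  holder_gradient_bound_general g hg_cont hg_pos C q θ τ a hC hq hθ hτ2 ε hε1 hε2 R v hv
end

section
/- Let g : ℝ → ℝ be continuous, non-decreasing and everywhere positive, let C > 0, q ≥ 0, θ > 0 and τ > θq be constants, let R ∈ (0,∞], and let v : [0,R) → ℝ solve the Cauchy problem (★). Then for every r ∈ (0,R): v''(r) ≥ C · (1/θ − q/τ) · r^{τ − (q+1)} · g(v(r)) · (∫_0^r s^{τ−1} g(v(s)) ds)^{1/θ − 1} > 0. -/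
open Real MeasureTheory Set Filter Topology ENNReal

/-! Writing `F(r) = ∫_0^r s^{τ-1} g(v(s)) ds`, the equation gives `v' ≥ 0`, so `v` and hence
`g ∘ v` are non-decreasing on `[0, r]` and `F(r) ≤ g(v(r)) r^τ / τ`. Differentiating
`v' = C r^{-q} F^{1/θ}` gives
`v''(r) = C r^{-q-1} F^{1/θ-1} (r^τ g(v(r)) / θ - q F(r))`, and the bound on `F(r)` turns the
bracket into at least `(1/θ - q/τ) r^τ g(v(r))`. -/

theorem hasDerivAt_integral_of_eventually_continuousAt {f : ℝ → ℝ} {a b : ℝ}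
    (hf : IntervalIntegrable f volume a b) (hcont : ∀ᶠ x in 𝓝 b, ContinuousAt f x) :
    HasDerivAt (fun u => ∫ x in a..u, f x) (f b) b := by
  obtain ⟨U, hU, hUopen, hbU⟩ := eventually_nhds_iff.1 hcont
  exact intervalIntegral.integral_hasDerivAt_right hf
    (ContinuousAt.stronglyMeasurableAtFilter hUopen hU b hbU) (hU b hbU)

theorem integral_rpow_mul_le_of_monotoneOn {φ : ℝ → ℝ} {τ r : ℝ} (hτ : 0 < τ) (hr : 0 ≤ r)
    (hφ : MonotoneOn φ (Icc 0 r))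
    (hint : IntervalIntegrable (fun s => s ^ (τ - 1) * φ s) volume 0 r) :
    ∫ s in (0:ℝ)..r, s ^ (τ - 1) * φ s ≤ φ r * r ^ τ / τ :=
  calc ∫ s in (0:ℝ)..r, s ^ (τ - 1) * φ s
      ≤ ∫ s in (0:ℝ)..r, s ^ (τ - 1) * φ r := by
        refine intervalIntegral.integral_mono_on hr hint
          ((intervalIntegral.intervalIntegrable_rpow' (by linarith)).mul_const _) fun s hs => ?_
        exact mul_le_mul_of_nonneg_left (hφ hs (right_mem_Icc.2 hr) hs.2) (rpow_nonneg hs.1 _)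
    _ = φ r * r ^ τ / τ := by
        rw [intervalIntegral.integral_mul_const, integral_rpow (Or.inl (by linarith)),
          sub_add_cancel, zero_rpow hτ.ne']
        ring

theorem eventually_pos_and_ofReal_lt {R : ℝ≥0∞} {r : ℝ} (hr : 0 < r)
    (hrR : ENNReal.ofReal r < R) : ∀ᶠ x in 𝓝 r, 0 < x ∧ ENNReal.ofReal x < R :=
  (lt_mem_nhds hr).and (ENNReal.continuous_ofReal.continuousAt.eventually (gt_mem_nhds hrR))

/-- The right side is the product-rule value of `v''(r)`, with `F = ∫_0^r s^{τ-1} g(v(s)) ds`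
and `G = g(v(r))`. -/
theorem le_of_le_mul_rpow_div {C q θ τ r F G : ℝ} (hC : 0 ≤ C) (hq : 0 ≤ q) (hτ : 0 < τ)
    (hr : 0 < r) (hF : 0 < F) (hFG : F ≤ G * r ^ τ / τ) :
    C * (1 / θ - q / τ) * r ^ (τ - (q + 1)) * G * F ^ (1 / θ - 1) ≤
      C * (-q * r ^ (-q - 1)) * F ^ (1 / θ) +
        C * r ^ (-q) * (r ^ (τ - 1) * G * (1 / θ) * F ^ (1 / θ - 1)) := by
  rw [show τ - (q + 1) = τ + -q - 1 by ring, rpow_sub_one hr.ne', rpow_add hr,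
    rpow_sub_one hr.ne', rpow_sub_one hr.ne', rpow_sub_one hF.ne']
  have hgap : 0 ≤ C * q * r ^ (-q) * F ^ (1 / θ) / (r * F) * (G * r ^ τ / τ - F) := by
    have := rpow_pos_of_pos hr (-q)
    have := rpow_pos_of_pos hF (1 / θ)
    exact mul_nonneg (by positivity) (sub_nonneg.2 hFG)
  have hdiff : C * (-q * (r ^ (-q) / r)) * F ^ (1 / θ) +
        C * r ^ (-q) * (r ^ τ / r * G * (1 / θ) * (F ^ (1 / θ) / F)) -
      C * (1 / θ - q / τ) * (r ^ τ * r ^ (-q) / r) * G * (F ^ (1 / θ) / F) =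
      C * q * r ^ (-q) * F ^ (1 / θ) / (r * F) * (G * r ^ τ / τ - F) := by
    field_simp
    ring
  linarith

namespace SolvesCauchy

variable {C q τ θ a : ℝ} {g v : ℝ → ℝ} {R : ℝ≥0∞} {r : ℝ}

theorem monotoneOn (hv : SolvesCauchy C q τ θ a g R v) (hC : 0 ≤ C) (hg : ∀ t, 0 ≤ g t)
    (hrR : ENNReal.ofReal r < R) : MonotoneOn v (Icc 0 r) := by
  have hderiv : ∀ x ∈ interior (Icc (0:ℝ) r), HasDerivAt v (cauchyRHS C q τ θ g v x) x := by
    rw [interior_Icc]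
    exact fun x hx => hv.2.2 x hx.1 ((ENNReal.ofReal_le_ofReal hx.2.le).trans_lt hrR)
  refine monotoneOn_of_deriv_nonneg (convex_Icc 0 r)
    (hv.1.mono fun x hx => ⟨hx.1, (ENNReal.ofReal_le_ofReal hx.2).trans_lt hrR⟩)
    (fun x hx => (hderiv x hx).differentiableAt.differentiableWithinAt) fun x hx => ?_
  rw [(hderiv x hx).deriv]
  rw [interior_Icc] at hx
  have hF : 0 ≤ ∫ s in (0:ℝ)..x, s ^ (τ - 1) * g (v s) :=
    intervalIntegral.integral_nonneg hx.1.le fun s hs => mul_nonneg (rpow_nonneg hs.1 _) (hg _)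
  exact mul_nonneg (mul_nonneg hC (rpow_nonneg hx.1.le _)) (rpow_nonneg hF _)

theorem intervalIntegrable (hv : SolvesCauchy C q τ θ a g R v) (hg : Continuous g)
    (hτ : 0 < τ) (hr : 0 ≤ r) (hrR : ENNReal.ofReal r < R) :
    IntervalIntegrable (fun s => s ^ (τ - 1) * g (v s)) volume 0 r := by
  refine (intervalIntegral.intervalIntegrable_rpow' (by linarith)).mul_continuousOn ?_
  rw [uIcc_of_le hr]
  exact hg.comp_continuousOn
    (hv.1.mono fun x hx => ⟨hx.1, (ENNReal.ofReal_le_ofReal hx.2).trans_lt hrR⟩)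

theorem eventually_continuousAt (hv : SolvesCauchy C q τ θ a g R v) (hg : Continuous g)
    (hr : 0 < r) (hrR : ENNReal.ofReal r < R) :
    ∀ᶠ x in 𝓝 r, ContinuousAt (fun s => s ^ (τ - 1) * g (v s)) x := by
  filter_upwards [eventually_pos_and_ofReal_lt hr hrR] with x ⟨hx, hxR⟩
  exact (continuousAt_rpow_const x _ (Or.inl hx.ne')).mul
    (hg.continuousAt.comp (hv.2.2 x hx hxR).continuousAt)

theorem hasDerivAt_deriv (hv : SolvesCauchy C q τ θ a g R v) (hg : Continuous g) (hτ : 0 < τ)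
    (hr : 0 < r) (hrR : ENNReal.ofReal r < R)
    (hF : 0 < ∫ s in (0:ℝ)..r, s ^ (τ - 1) * g (v s)) :
    HasDerivAt (deriv v)
      (C * (-q * r ^ (-q - 1)) * (∫ s in (0:ℝ)..r, s ^ (τ - 1) * g (v s)) ^ (1 / θ) +
        C * r ^ (-q) * (r ^ (τ - 1) * g (v r) * (1 / θ) *
          (∫ s in (0:ℝ)..r, s ^ (τ - 1) * g (v s)) ^ (1 / θ - 1))) r := by
  have hderiv_eq : deriv v =ᶠ[𝓝 r] cauchyRHS C q τ θ g v := by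
    filter_upwards [eventually_pos_and_ofReal_lt hr hrR] with x ⟨hx, hxR⟩
    exact (hv.2.2 x hx hxR).deriv
  have hF' := hasDerivAt_integral_of_eventually_continuousAt
    (hv.intervalIntegrable hg hτ hr.le hrR) (hv.eventually_continuousAt hg hr hrR)
  exact (((hasDerivAt_rpow_const (Or.inl hr.ne')).const_mul C).mul
    (hF'.rpow_const (Or.inl hF.ne'))).congr_of_eventuallyEq hderiv_eq

end SolvesCauchy

/-- The convexity estimate (2.29) in the proof of Theorem 1.1: every solution of (★)
with `τ > θq` satisfies, for `r ∈ (0, R)`,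
`v''(r) ≥ C (1/θ - q/τ) r^{τ-(q+1)} g(v(r)) (∫_0^r s^{τ-1} g(v(s)) ds)^{1/θ-1} > 0`. -/
theorem convexity_estimate
    (g : ℝ → ℝ) (hg_cont : Continuous g) (hg_mono : Monotone g) (hg_pos : ∀ t, 0 < g t)
    (C q θ τ a : ℝ) (hC : 0 < C) (hq : 0 ≤ q) (hθ : 0 < θ) (hτ : θ * q < τ)
    (R : ℝ≥0∞) (v : ℝ → ℝ)
    (hv : SolvesCauchy C q τ θ a g R v) :
    ∀ r : ℝ, 0 < r → ENNReal.ofReal r < R →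
      DifferentiableAt ℝ (deriv v) r ∧
      C * (1 / θ - q / τ) * r ^ (τ - (q + 1)) * g (v r) *
          (∫ s in (0:ℝ)..r, s ^ (τ - 1) * g (v s)) ^ (1 / θ - 1) ≤
        deriv (deriv v) r ∧
      0 < C * (1 / θ - q / τ) * r ^ (τ - (q + 1)) * g (v r) *
          (∫ s in (0:ℝ)..r, s ^ (τ - 1) * g (v s)) ^ (1 / θ - 1) := by
  intro r hr hrR
  have hτ_pos : 0 < τ := (mul_nonneg hθ.le hq).trans_lt hτ
  have hgap : 0 < 1 / θ - q / τ := by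
    rw [sub_pos, div_lt_div_iff₀ hτ_pos hθ]
    linarith
  have hint := hv.intervalIntegrable hg_cont hτ_pos hr.le hrR
  have hF_pos : 0 < ∫ s in (0:ℝ)..r, s ^ (τ - 1) * g (v s) :=
    intervalIntegral.intervalIntegral_pos_of_pos_on hint
      (fun x hx => mul_pos (rpow_pos_of_pos hx.1 _) (hg_pos _)) hr
  have hF_le := integral_rpow_mul_le_of_monotoneOn hτ_pos hr.le
    (hg_mono.comp_monotoneOn (hv.monotoneOn hC.le (fun t => (hg_pos t).le) hrR)) hint
  have hv'' := hv.hasDerivAt_deriv hg_cont hτ_pos hr hrR hF_pos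
  refine ⟨hv''.differentiableAt, ?_, ?_⟩
  · rw [hv''.deriv]
    exact le_of_le_mul_rpow_div hC.le hq hτ_pos hr hF_pos hF_le
  · have := rpow_pos_of_pos hr (τ - (q + 1))
    have := rpow_pos_of_pos hF_pos (1 / θ - 1)
    have := hg_pos (v r)
    positivity
end
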